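/- arXiv:1709.00683 — 4 statements merged into one kernel-verified Lean document; each statement's English description precedes it below -/
import Mathlib

section
/- Continuous right inverse from an interior condition: Let X be a normed linear space, C ⊆ X a convex set containing 0, and Λ : X → ℝ^m a continuous linear map such that 0 ∈ int Λ(C). Then there exist ρ > 0, γ > 0 and a continuous mapping R : U_{ℝ^m}(0,ρ) → C such that Λ(R(z)) = z and ‖R(z)‖_X ≤ γ|z| for all z with |z| < ρ. -/
/-!
Since `0` is interior to `Λ(C)`, the vertices `±δ eᵢ` of a small cross-polytope lie in `Λ(C)`;
lift them to points `xⱼ ∈ C`. Writing `z = ∑ᵢ (zᵢ⁺/δ)(δ eᵢ) + (zᵢ⁻/δ)(-δ eᵢ)`, apply the same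
weights to the lifts. The weights are continuous, nonnegative and `O(‖z‖)`, and for small `z`
they sum to at most `1`, so the combination stays in `C` because `C` is convex and contains `0`.
-/

open Set Topology Metric

theorem Convex.sum_smul_mem_of_zero_mem {E ι : Type*} [AddCommGroup E] [Module ℝ E] {C : Set E}
    (hC : Convex ℝ C) (h0 : (0 : E) ∈ C) {s : Finset ι} {t : ι → ℝ} {x : ι → E}
    (ht : ∀ i ∈ s, 0 ≤ t i) (hsum : ∑ i ∈ s, t i ≤ 1) (hx : ∀ i ∈ s, x i ∈ C) :
    ∑ i ∈ s, t i • x i ∈ C := by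
  rcases (Finset.sum_nonneg ht).eq_or_lt with hzero | hpos
  · have ht0 := (Finset.sum_eq_zero_iff_of_nonneg ht).1 hzero.symm
    rwa [Finset.sum_eq_zero fun i hi => by rw [ht0 i hi, zero_smul]]
  · have := hC.smul_mem_of_zero_mem h0 (hC.centerMass_mem ht hpos hx) ⟨hpos.le, hsum⟩
    rwa [Finset.centerMass, smul_smul, mul_inv_cancel₀ hpos.ne', one_smul] at this

theorem norm_sum_smul_le_mul_sum_norm {E ι : Type*} [SeminormedAddCommGroup E] [NormedSpace ℝ E]
    {s : Finset ι} {t : ι → ℝ} {x : ι → E} {c : ℝ} (ht : ∀ i ∈ s, 0 ≤ t i)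
    (htc : ∀ i ∈ s, t i ≤ c) : ‖∑ i ∈ s, t i • x i‖ ≤ c * ∑ i ∈ s, ‖x i‖ := by
  rw [Finset.mul_sum]
  refine (norm_sum_le _ _).trans (Finset.sum_le_sum fun i hi => ?_)
  rw [norm_smul, Real.norm_of_nonneg (ht i hi)]
  exact mul_le_mul_of_nonneg_right (htc i hi) (norm_nonneg _)

section PosPart

variable {α : Type*} [Lattice α] [AddGroup α] [AddLeftMono α] [AddRightMono α]

theorem posPart_le_abs (a : α) : a⁺ ≤ |a| :=
  posPart_add_negPart a ▸ le_add_of_nonneg_right (negPart_nonneg a)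

theorem negPart_le_abs (a : α) : a⁻ ≤ |a| :=
  posPart_add_negPart a ▸ le_add_of_nonneg_left (posPart_nonneg a)

end PosPart

theorem abs_apply_le_pi_norm {ι : Type*} [Fintype ι] (z : ι → ℝ) (i : ι) : |z i| ≤ ‖z‖ := by
  simpa using norm_le_pi_norm z i

noncomputable section

namespace CrossPolytope

variable {m : ℕ} {δ : ℝ}

def vertex (δ : ℝ) : Fin m ⊕ Fin m → Fin m → ℝ :=
  Sum.elim (fun i => Pi.single i δ) (fun i => Pi.single i (-δ))

def weight (δ : ℝ) (z : Fin m → ℝ) : Fin m ⊕ Fin m → ℝ :=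
  Sum.elim (fun i => (z i)⁺ / δ) (fun i => (z i)⁻ / δ)

theorem vertex_mem_closedBall (hδ : 0 ≤ δ) (j : Fin m ⊕ Fin m) :
    vertex δ j ∈ closedBall 0 δ := by
  cases j <;> simp [vertex, Pi.norm_single, abs_of_nonneg hδ]

theorem sum_weight_smul_vertex (hδ : δ ≠ 0) (z : Fin m → ℝ) :
    ∑ j, weight δ z j • vertex δ j = z := by
  simp only [Fintype.sum_sum_type, weight, vertex, Sum.elim_inl, Sum.elim_inr, ← Pi.single_smul,
    smul_eq_mul, mul_neg, div_mul_cancel₀ _ hδ, Finset.univ_sum_single]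
  ext i
  exact (sub_eq_add_neg _ _).symm.trans (posPart_sub_negPart _)

theorem weight_nonneg (hδ : 0 ≤ δ) (z : Fin m → ℝ) (j : Fin m ⊕ Fin m) : 0 ≤ weight δ z j := by
  cases j <;> exact div_nonneg (by simp [posPart_nonneg, negPart_nonneg]) hδ

theorem weight_le (hδ : 0 ≤ δ) (z : Fin m → ℝ) (j : Fin m ⊕ Fin m) :
    weight δ z j ≤ ‖z‖ / δ := by
  cases j with
  | inl i =>
    exact div_le_div_of_nonneg_right ((posPart_le_abs _).trans (abs_apply_le_pi_norm z i)) hδ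
  | inr i =>
    exact div_le_div_of_nonneg_right ((negPart_le_abs _).trans (abs_apply_le_pi_norm z i)) hδ

theorem sum_weight_le (hδ : 0 ≤ δ) (z : Fin m → ℝ) : ∑ j, weight δ z j ≤ m * ‖z‖ / δ := by
  have h : ∑ i, |z i| ≤ m * ‖z‖ := by
    simpa using Finset.sum_le_card_nsmul Finset.univ _ _ fun i _ => abs_apply_le_pi_norm z i
  simp only [Fintype.sum_sum_type, weight, Sum.elim_inl, Sum.elim_inr, ← Finset.sum_add_distrib,
    ← add_div, posPart_add_negPart, ← Finset.sum_div]
  exact div_le_div_of_nonneg_right h hδ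

theorem continuous_weight (j : Fin m ⊕ Fin m) : Continuous fun z : Fin m → ℝ => weight δ z j := by
  cases j
  · exact (continuous_posPart.comp (continuous_apply _)).div_const δ
  · exact (continuous_negPart.comp (continuous_apply _)).div_const δ

end CrossPolytope

end

open CrossPolytope

/-- **Continuous right inverse from an interior condition.**
Let `X` be a normed linear space, `C ⊆ X` a convex set containing `0`, and
`Λ : X → ℝ^m` a continuous linear map such that `0 ∈ int Λ(C)`.  Then there exist
`ρ > 0`, `γ > 0` and a continuous mapping `R : U_{ℝ^m}(0,ρ) → C` such that
`Λ (R z) = z` and `‖R z‖ ≤ γ |z|` for all `z` with `|z| < ρ`. -/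
theorem continuous_right_inverse_of_mem_interior_image
    {X : Type*} [NormedAddCommGroup X] [NormedSpace ℝ X] {m : ℕ}
    (C : Set X) (hCconv : Convex ℝ C) (h0C : (0 : X) ∈ C)
    (Λ : X →L[ℝ] (Fin m → ℝ))
    (hint : (0 : Fin m → ℝ) ∈ interior (Λ '' C)) :
    ∃ ρ > (0:ℝ), ∃ γ > (0:ℝ), ∃ R : (Fin m → ℝ) → X,
      ContinuousOn R (ball (0 : Fin m → ℝ) ρ) ∧
      ∀ z ∈ ball (0 : Fin m → ℝ) ρ,
        R z ∈ C ∧ Λ (R z) = z ∧ ‖R z‖ ≤ γ * ‖z‖ := by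
  obtain ⟨δ, hδ, hball⟩ := nhds_basis_closedBall.mem_iff.1 (mem_interior_iff_mem_nhds.1 hint)
  choose x hxC hx using fun j => hball (vertex_mem_closedBall (m := m) hδ.le j)
  refine ⟨δ / (m + 1), by positivity, (∑ j, ‖x j‖) / δ + 1, by positivity,
    fun z => ∑ j, weight δ z j • x j,
    (continuous_finsetSum _ fun j _ => (continuous_weight j).smul continuous_const).continuousOn,
    fun z hz => ⟨?_, ?_, ?_⟩⟩
  · refine hCconv.sum_smul_mem_of_zero_mem h0C (fun j _ => weight_nonneg hδ.le z j) ?_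
      fun j _ => hxC j
    have hz : m * ‖z‖ ≤ δ := by
      rw [mem_ball_zero_iff, lt_div_iff₀ (by positivity)] at hz
      nlinarith [norm_nonneg z]
    exact (sum_weight_le hδ.le z).trans ((div_le_one hδ).2 hz)
  · simp only [map_sum, map_smul, hx, sum_weight_smul_vertex hδ.ne']
  · calc ‖∑ j, weight δ z j • x j‖ ≤ ‖z‖ / δ * ∑ j, ‖x j‖ :=
          norm_sum_smul_le_mul_sum_norm (fun j _ => weight_nonneg hδ.le z j)
            fun j _ => weight_le hδ.le z j
      _ ≤ ((∑ j, ‖x j‖) / δ + 1) * ‖z‖ := by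
          rw [div_mul_comm]
          exact mul_le_mul_of_nonneg_right (le_add_of_nonneg_right zero_le_one) (norm_nonneg z)
end

section
/- Example 1: Let T > π. The control dynamical system ẋ₁(t) = u(t), ẋ₂(t) = u(t)² − x₁(t)², u(t) ∈ ℝ for a.e. t ∈ [0,T], with boundary conditions x₁(0) = x₂(0) = x₁(T) = x₂(T) = 0, is locally controllable with respect to the admissible process (x̂,û) = (0,0). -/
/-!
Take for `x₁` the straight line from `x₁(0)` to `x₁(T)` plus `s sin (μ t)` with `μ T ∈ π ℤ`, so
that the endpoints of `x₁` are untouched, and `u = ẋ₁`. Then `x₂(T) - x₂(0) = ∫₀ᵀ (u² - x₁²)` is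
a quadratic polynomial in `s` whose constant term is small for small boundary data and whose
leading coefficient is `(T/2) (μ² - 1)`. Because `T > π`, this coefficient is negative for
`μ = π / T` and positive for `μ ≥ π`; so, whichever side of the constant term the target value
of `x₂(T) - x₂(0)` lies on, the intermediate value theorem gives a small `s` hitting it, and the
whole trajectory stays small.
-/

open MeasureTheory Set intervalIntegral Real

lemma exists_pos_le_mul_lt {r L δ : ℝ} (hr : 0 < r) (hδ : 0 < δ) :
    ∃ ε > 0, ε ≤ r ∧ ε * L < δ := by
  have hL : 0 < |L| + 1 := by positivity
  set ε := min r (δ / (|L| + 1))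
  have hε : 0 < ε := lt_min hr (div_pos hδ hL)
  refine ⟨ε, hε, min_le_left _ _, ?_⟩
  calc ε * L ≤ ε * |L| := mul_le_mul_of_nonneg_left (le_abs_self L) hε.le
    _ < ε * (|L| + 1) := by gcongr; linarith
    _ ≤ δ / (|L| + 1) * (|L| + 1) := by gcongr; exact min_le_right _ _
    _ = δ := div_mul_cancel₀ _ hL.ne'

lemma exists_abs_le_add_mul_add_sq_mul_eq {A B C τ r : ℝ} (hr : 0 ≤ r)
    (hτ : τ ∈ uIcc A (A + r ^ 2 * C)) : ∃ s, |s| ≤ r ∧ A + s * B + s ^ 2 * C = τ := by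
  wlog hC : 0 ≤ C generalizing A B C τ
  · have hτ' : -τ ∈ uIcc (-A) (-A + r ^ 2 * -C) := by
      rw [mem_uIcc] at hτ ⊢
      rcases hτ with h | h
      exacts [Or.inr ⟨by linarith, by linarith⟩, Or.inl ⟨by linarith, by linarith⟩]
    obtain ⟨s, hs, h⟩ := this (B := -B) hτ' (by linarith)
    exact ⟨s, hs, by linarith⟩
  wlog hB : 0 ≤ B generalizing B
  · obtain ⟨s, hs, h⟩ := this (B := -B) (by linarith)
    exact ⟨-s, by rwa [abs_neg], by rw [← h]; ring⟩
  rw [uIcc_of_le (by nlinarith)] at hτ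
  obtain ⟨s, hs, h⟩ := intermediate_value_Icc hr (f := fun s => A + s * B + s ^ 2 * C)
    (by fun_prop) (show τ ∈ Icc (A + 0 * B + 0 ^ 2 * C) (A + r * B + r ^ 2 * C) from
      ⟨by linarith [hτ.1], by nlinarith [hτ.2]⟩)
  exact ⟨s, abs_le.mpr ⟨by linarith [hs.1], hs.2⟩, h⟩

-- Along the system, `x₂ T - x₂ 0 = action T x₁ u`.
noncomputable def action (T : ℝ) (x u : ℝ → ℝ) : ℝ := ∫ t in (0 : ℝ)..T, (u t ^ 2 - x t ^ 2)

lemma abs_action_le {T X U : ℝ} {x u : ℝ → ℝ} (hT : 0 ≤ T)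
    (hx : ∀ t ∈ Icc 0 T, |x t| ≤ X) (hu : ∀ t ∈ Icc 0 T, |u t| ≤ U) :
    |action T x u| ≤ T * (U ^ 2 + X ^ 2) := by
  have := norm_integral_le_of_norm_le_const (a := 0) (b := T) (C := U ^ 2 + X ^ 2)
    (f := fun t => u t ^ 2 - x t ^ 2) fun t ht => by
      rw [uIoc_of_le hT] at ht
      have ht' : t ∈ Icc 0 T := Ioc_subset_Icc_self ht
      have hu' := abs_le.mp (hu t ht')
      have hx' := abs_le.mp (hx t ht')
      calc ‖u t ^ 2 - x t ^ 2‖ ≤ u t ^ 2 + x t ^ 2 := by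
            rw [Real.norm_eq_abs, abs_le]
            constructor <;> nlinarith [sq_nonneg (u t), sq_nonneg (x t)]
        _ ≤ U ^ 2 + X ^ 2 := add_le_add (sq_le_sq' hu'.1 hu'.2) (sq_le_sq' hx'.1 hx'.2)
  rwa [Real.norm_eq_abs, sub_zero, abs_of_nonneg hT, mul_comm] at this

lemma action_add_mul {T s : ℝ} {x u w v : ℝ → ℝ} (hx : Continuous x) (hu : Continuous u)
    (hw : Continuous w) (hv : Continuous v) :
    action T (fun t => x t + s * w t) (fun t => u t + s * v t) =
      action T x u + s * (2 * ∫ t in (0 : ℝ)..T, (u t * v t - x t * w t)) +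
        s ^ 2 * action T w v := by
  unfold action
  calc ∫ t in (0 : ℝ)..T, ((u t + s * v t) ^ 2 - (x t + s * w t) ^ 2)
      = ∫ t in (0 : ℝ)..T, ((u t ^ 2 - x t ^ 2) + (2 * s) * (u t * v t - x t * w t) +
          s ^ 2 * (v t ^ 2 - w t ^ 2)) := integral_congr fun t _ => by ring
    _ = _ := by
      rw [intervalIntegral.integral_add ((by fun_prop : Continuous _).intervalIntegrable _ _)
          ((by fun_prop : Continuous _).intervalIntegrable _ _),
        intervalIntegral.integral_add ((by fun_prop : Continuous _).intervalIntegrable _ _)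
          ((by fun_prop : Continuous _).intervalIntegrable _ _),
        intervalIntegral.integral_const_mul, intervalIntegral.integral_const_mul]
      ring

lemma action_sin_mul {T μ : ℝ} (hμ : μ ≠ 0) (hμT : sin (μ * T) = 0) :
    action T (fun t => sin (μ * t)) (fun t => μ * cos (μ * t)) = T / 2 * (μ ^ 2 - 1) := by
  have hsin : ∫ t in (0 : ℝ)..T, sin (μ * t) ^ 2 = T / 2 := by
    rw [integral_comp_mul_left (fun t => sin t ^ 2) hμ, integral_sin_sq, hμT]
    simp [field]
  have hcos : ∫ t in (0 : ℝ)..T, cos (μ * t) ^ 2 = T / 2 := by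
    rw [integral_comp_mul_left (fun t => cos t ^ 2) hμ, integral_cos_sq, hμT]
    simp [field]
  unfold action
  simp_rw [mul_pow]
  rw [intervalIntegral.integral_sub ((by fun_prop : Continuous _).intervalIntegrable _ _)
      ((by fun_prop : Continuous _).intervalIntegrable _ _), intervalIntegral.integral_const_mul,
    hsin, hcos]
  ring

def IsProcess (T : ℝ) (x₁ x₂ u : ℝ → ℝ) : Prop :=
  ContinuousOn x₁ (Icc 0 T) ∧ ContinuousOn x₂ (Icc 0 T) ∧ Measurable u ∧
    (∃ C : ℝ, ∀ᵐ t ∂(volume.restrict (Icc 0 T)), |u t| ≤ C) ∧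
    IntervalIntegrable u volume 0 T ∧
    IntervalIntegrable (fun s => u s ^ 2 - x₁ s ^ 2) volume 0 T ∧
    (∀ t ∈ Icc 0 T, x₁ t = x₁ 0 + ∫ s in (0 : ℝ)..t, u s) ∧
    (∀ t ∈ Icc 0 T, x₂ t = x₂ 0 + ∫ s in (0 : ℝ)..t, (u s ^ 2 - x₁ s ^ 2))

lemma isProcess_of_hasDerivAt {T b : ℝ} {x₁ u : ℝ → ℝ} (hx : ∀ t, HasDerivAt x₁ (u t) t)
    (hu : Continuous u) : IsProcess T x₁ (fun t => b + action t x₁ u) u := by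
  have hx₁ : Continuous x₁ := continuous_iff_continuousAt.2 fun t => (hx t).continuousAt
  have hf : Continuous fun s => u s ^ 2 - x₁ s ^ 2 := by fun_prop
  have hx₂ : Continuous fun t => b + action t x₁ u :=
    continuous_const.add (continuous_primitive (fun _ _ => hf.intervalIntegrable _ _) 0)
  obtain ⟨C, hC⟩ := isCompact_Icc.exists_bound_of_continuousOn (s := Icc 0 T) hu.continuousOn
  refine ⟨hx₁.continuousOn, hx₂.continuousOn, hu.measurable,
    ⟨C, ae_restrict_of_forall_mem measurableSet_Icc hC⟩, hu.intervalIntegrable _ _,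
    hf.intervalIntegrable _ _, fun t _ => ?_, fun t _ => ?_⟩
  · rw [integral_eq_sub_of_hasDerivAt (fun s _ => hx s) (hu.intervalIntegrable _ _)]
    ring
  · simp [action]

noncomputable def linearState (a c T t : ℝ) : ℝ := a + (c - a) / T * t

noncomputable def sineState (a c T μ s t : ℝ) : ℝ := linearState a c T t + s * sin (μ * t)

noncomputable def sineControl (a c T μ s t : ℝ) : ℝ := (c - a) / T + s * (μ * cos (μ * t))

section SineTrajectory

variable {a b c T μ s ε : ℝ}

lemma hasDerivAt_sineState (t : ℝ) :
    HasDerivAt (sineState a c T μ s) (sineControl a c T μ s t) t := by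
  have hlin : HasDerivAt (linearState a c T) ((c - a) / T) t := by
    have := ((hasDerivAt_id' t).const_mul ((c - a) / T)).const_add a
    rwa [mul_one] at this
  have hsin : HasDerivAt (fun t => sin (μ * t)) (μ * cos (μ * t)) t := by
    simpa [mul_comm] using ((hasDerivAt_id t).const_mul μ).sin
  exact hlin.add (hsin.const_mul s)

lemma continuous_sineControl : Continuous (sineControl a c T μ s) := by
  unfold sineControl; fun_prop

lemma sineState_zero : sineState a c T μ s 0 = a := by
  simp [sineState, linearState]

lemma sineState_self (hT : T ≠ 0) (hμT : sin (μ * T) = 0) : sineState a c T μ s T = c := by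
  simp [sineState, linearState, hμT, div_mul_cancel₀ _ hT]

lemma abs_linearState_le (hT : 0 < T) {t : ℝ} (ht : t ∈ Icc 0 T) :
    |linearState a c T t| ≤ |a| + |c - a| := by
  have htT : |t / T| ≤ 1 := by
    rw [abs_of_nonneg (div_nonneg ht.1 hT.le)]; exact div_le_one_of_le₀ ht.2 hT.le
  calc |linearState a c T t| = |a + (c - a) * (t / T)| := by rw [linearState]; ring_nf
    _ ≤ |a| + |c - a| * |t / T| := by rw [← abs_mul]; exact abs_add_le _ _
    _ ≤ |a| + |c - a| := by gcongr; exact mul_le_of_le_one_right (abs_nonneg _) htT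

lemma abs_sineState_le (hT : 0 < T) {t : ℝ} (ht : t ∈ Icc 0 T) :
    |sineState a c T μ s t| ≤ |a| + |c - a| + |s| := by
  calc |sineState a c T μ s t| ≤ |linearState a c T t| + |s| * |sin (μ * t)| := by
        rw [sineState, ← abs_mul]; exact abs_add_le _ _
    _ ≤ |a| + |c - a| + |s| := by
        gcongr
        · exact abs_linearState_le hT ht
        · exact mul_le_of_le_one_right (abs_nonneg _) (abs_sin_le_one _)

lemma abs_sineControl_le (hT : 0 < T) (t : ℝ) :
    |sineControl a c T μ s t| ≤ |c - a| / T + |s| * |μ| := by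
  calc |sineControl a c T μ s t| ≤ |c - a| / T + |s| * (|μ| * |cos (μ * t)|) := by
        rw [sineControl, ← abs_of_pos hT, ← abs_div, ← abs_mul, ← abs_mul, abs_of_pos hT]
        exact abs_add_le _ _
    _ ≤ |c - a| / T + |s| * |μ| := by
        gcongr
        exact mul_le_of_le_one_right (abs_nonneg _) (abs_cos_le_one _)

lemma action_sineState (hμ : μ ≠ 0) (hμT : sin (μ * T) = 0) :
    ∃ B, ∀ s, action T (sineState a c T μ s) (sineControl a c T μ s) =
      action T (linearState a c T) (fun _ => (c - a) / T) + s * B +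
        s ^ 2 * (T / 2 * (μ ^ 2 - 1)) := by
  refine ⟨2 * ∫ t in (0 : ℝ)..T,
    ((c - a) / T * (μ * cos (μ * t)) - linearState a c T t * sin (μ * t)), fun s => ?_⟩
  rw [← action_sin_mul hμ hμT]
  exact action_add_mul (by unfold linearState; fun_prop) continuous_const (by fun_prop)
    (by fun_prop)

lemma exists_sineState_action_eq_of_mem_uIcc {τ : ℝ} (hμ : μ ≠ 0)
    (hμT : sin (μ * T) = 0) (hε : 0 ≤ ε)
    (hτ : τ ∈ uIcc (action T (linearState a c T) (fun _ => (c - a) / T))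
      (action T (linearState a c T) (fun _ => (c - a) / T) + ε ^ 2 * (T / 2 * (μ ^ 2 - 1)))) :
    ∃ s, |s| ≤ ε ∧ action T (sineState a c T μ s) (sineControl a c T μ s) = τ :=
  let ⟨B, hB⟩ := action_sineState (a := a) (c := c) hμ hμT
  let ⟨s, hs, h⟩ := exists_abs_le_add_mul_add_sq_mul_eq (B := B) hε hτ
  ⟨s, hs, (hB s).trans h⟩

lemma abs_action_linearState_le (hT : 0 < T) (hε : ε ≤ 1) (ha : |a| ≤ ε) (hc : |c| ≤ ε) :
    |action T (linearState a c T) (fun _ => (c - a) / T)| ≤ ε * (4 / T + 9 * T) := by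
  have hca : |c - a| ≤ 2 * ε := (abs_sub c a).trans (by linarith)
  calc _ ≤ T * ((2 * ε / T) ^ 2 + (3 * ε) ^ 2) :=
        abs_action_le hT.le (fun t ht => (abs_linearState_le hT ht).trans (by linarith))
          (fun _ _ => by rw [abs_div, abs_of_pos hT]; gcongr)
    _ = ε ^ 2 * (4 / T + 9 * T) := by field_simp; ring
    _ ≤ ε * (4 / T + 9 * T) := by
        have hε0 : 0 ≤ ε := (abs_nonneg a).trans ha
        gcongr
        nlinarith

lemma abs_sineState_lt_and_abs_add_action_lt {M δ : ℝ} (hT : 0 < T) (hε : ε ≤ 1)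
    (hεδ : ε * (4 + T * ((2 / T + M) ^ 2 + 16)) < δ) (ha : |a| ≤ ε) (hb : |b| ≤ ε)
    (hc : |c| ≤ ε) (hs : |s| ≤ ε) (hμ : |μ| ≤ M) {t : ℝ} (ht : t ∈ Icc 0 T) :
    |sineState a c T μ s t| < δ ∧
      |b + action t (sineState a c T μ s) (sineControl a c T μ s)| < δ := by
  have hε0 : 0 ≤ ε := (abs_nonneg a).trans ha
  have hK : 0 ≤ T * ((2 / T + M) ^ 2 + 16) := mul_nonneg hT.le (by positivity)
  have hca : |c - a| ≤ 2 * ε := (abs_sub c a).trans (by linarith)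
  have hx : ∀ r ∈ Icc 0 T, |sineState a c T μ s r| ≤ 4 * ε :=
    fun r hr => (abs_sineState_le hT hr).trans (by linarith)
  have hu : ∀ r, |sineControl a c T μ s r| ≤ ε * (2 / T + M) := fun r =>
    (abs_sineControl_le hT r).trans <| by
      have : |s| * |μ| ≤ ε * M := mul_le_mul hs hμ (abs_nonneg _) hε0
      have : |c - a| / T ≤ 2 * ε / T := by gcongr
      linarith [show ε * (2 / T + M) = 2 * ε / T + ε * M by ring]
  have hact := abs_action_le ht.1 (fun r hr => hx r ⟨hr.1, hr.2.trans ht.2⟩) (fun r _ => hu r)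
  refine ⟨by nlinarith [hx t ht], ?_⟩
  calc |b + action t (sineState a c T μ s) (sineControl a c T μ s)|
      ≤ ε + t * (ε ^ 2 * ((2 / T + M) ^ 2 + 16)) := by
        refine (abs_add_le _ _).trans (add_le_add hb (hact.trans_eq ?_))
        ring
    _ ≤ ε + T * (ε * ((2 / T + M) ^ 2 + 16)) := by
        gcongr
        · exact ht.2
        · nlinarith
    _ < δ := by nlinarith

end SineTrajectory

lemma exists_sineState_action_eq {T : ℝ} (hT : π < T) :
    ∃ κ > 0, ∃ M, ∀ a c τ ε : ℝ, 0 ≤ ε →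
      |action T (linearState a c T) (fun _ => (c - a) / T)| + |τ| ≤ ε ^ 2 * κ →
      ∃ μ s, |μ| ≤ M ∧ sin (μ * T) = 0 ∧ |s| ≤ ε ∧
        action T (sineState a c T μ s) (sineControl a c T μ s) = τ := by
  have hT0 : 0 < T := pi_pos.trans hT
  have hsin : ∀ n : ℕ, sin (n * π / T * T) = 0 := fun n => by
    rw [div_mul_cancel₀ _ hT0.ne']; exact sin_nat_mul_pi n
  set μ₁ := π / T
  set μ₂ := ⌈T⌉₊ * π / T
  have hμ₁ : 0 < μ₁ ∧ μ₁ < 1 := ⟨by positivity, (div_lt_one hT0).2 hT⟩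
  have hμ₂ : 1 < μ₂ := by
    have : T * π ≤ ⌈T⌉₊ * π := by gcongr; exact Nat.le_ceil T
    rw [lt_div_iff₀ hT0]; nlinarith [pi_gt_three]
  set κ := min (T / 2 * (1 - μ₁ ^ 2)) (T / 2 * (μ₂ ^ 2 - 1))
  refine ⟨κ, lt_min (mul_pos (half_pos hT0) (by nlinarith)) (mul_pos (half_pos hT0) (by nlinarith)),
    μ₂, fun a c τ ε hε hτ => ?_⟩
  set A := action T (linearState a c T) (fun _ => (c - a) / T)
  have hκ₁ : ε ^ 2 * κ ≤ ε ^ 2 * (T / 2 * (1 - μ₁ ^ 2)) := by gcongr; exact min_le_left _ _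
  have hκ₂ : ε ^ 2 * κ ≤ ε ^ 2 * (T / 2 * (μ₂ ^ 2 - 1)) := by gcongr; exact min_le_right _ _
  rcases le_total A τ with hAτ | hτA
  · obtain ⟨s, hs, h⟩ := exists_sineState_action_eq_of_mem_uIcc (a := a) (c := c) (μ := μ₂)
      (by positivity) (hsin _) hε
      (mem_uIcc.2 (Or.inl ⟨hAτ, by linarith [le_abs_self τ, neg_abs_le A]⟩))
    exact ⟨μ₂, s, (abs_of_pos (by positivity)).le, hsin _, hs, h⟩
  · obtain ⟨s, hs, h⟩ := exists_sineState_action_eq_of_mem_uIcc (a := a) (c := c) (T := T)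
      hμ₁.1.ne' (by simpa using hsin 1) hε
      (mem_uIcc.2 (Or.inr ⟨by linarith [neg_abs_le τ, le_abs_self A], hτA⟩))
    exact ⟨μ₁, s, by rw [abs_of_pos hμ₁.1]; linarith, by simpa using hsin 1, hs, h⟩

/-- **Example 1.**  For `T > π` the system `ẋ₁ = u`, `ẋ₂ = u² − x₁²`, `u(t) ∈ ℝ` a.e.
on `[0,T]`, with boundary conditions `x₁(0)=x₂(0)=x₁(T)=x₂(T)=0`, is locally controllable
with respect to the admissible process `(x̂,û) = (0,0)` : for every neighbourhood of `x̂ = 0`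
in `C([0,T],ℝ²)` (a sup-ball of radius `δ`) there is a neighbourhood of the origin of `ℝ⁴`
(a ball of radius `ρ`) such that every boundary value `y = (y', y'')` in it is realized by
a trajectory staying in the given neighbourhood. -/
theorem example1_locally_controllable (T : ℝ) (hT : Real.pi < T) :
    ∀ δ > (0:ℝ), ∃ ρ > (0:ℝ),
      ∀ y : (ℝ × ℝ) × (ℝ × ℝ), ‖y‖ < ρ →
        ∃ x₁ x₂ u : ℝ → ℝ,
          ContinuousOn x₁ (Icc (0:ℝ) T) ∧ ContinuousOn x₂ (Icc (0:ℝ) T) ∧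
          Measurable u ∧
          (∃ C : ℝ, ∀ᵐ t ∂(volume.restrict (Icc (0:ℝ) T)), |u t| ≤ C) ∧
          IntervalIntegrable u volume 0 T ∧
          IntervalIntegrable (fun s => (u s) ^ 2 - (x₁ s) ^ 2) volume 0 T ∧
          (∀ t ∈ Icc (0:ℝ) T, x₁ t = x₁ 0 + ∫ s in (0:ℝ)..t, u s) ∧
          (∀ t ∈ Icc (0:ℝ) T, x₂ t = x₂ 0 + ∫ s in (0:ℝ)..t, ((u s) ^ 2 - (x₁ s) ^ 2)) ∧
          ((x₁ 0, x₂ 0), (x₁ T, x₂ T)) = y ∧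
          (∀ t ∈ Icc (0:ℝ) T, |x₁ t| < δ ∧ |x₂ t| < δ) := by
  intro δ hδ
  have hT0 : 0 < T := pi_pos.trans hT
  obtain ⟨κ, hκ, M, hsel⟩ := exists_sineState_action_eq hT
  obtain ⟨ε, hε, hε1, hεδ⟩ := exists_pos_le_mul_lt one_pos hδ (L := 4 + T * ((2 / T + M) ^ 2 + 16))
  obtain ⟨ρ, hρ, hρε, hρκ⟩ :=
    exists_pos_le_mul_lt hε (by positivity : 0 < ε ^ 2 * κ) (L := 4 / T + 9 * T + 2)
  refine ⟨ρ, hρ, ?_⟩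
  rintro ⟨⟨a, b⟩, c, d⟩ hy
  simp only [Prod.norm_def, Real.norm_eq_abs, max_lt_iff] at hy
  obtain ⟨⟨ha, hb⟩, hc, hd⟩ := hy
  have hA := abs_action_linearState_le hT0 (hρε.trans hε1) ha.le hc.le
  obtain ⟨μ, s, hμ, hμT, hs, hact⟩ := hsel a c (d - b) ε hε.le <| by
    have : |d - b| ≤ 2 * ρ := (abs_sub d b).trans (by linarith)
    linarith
  obtain ⟨h₁, h₂, h₃, h₄, h₅, h₆, h₇, h₈⟩ := isProcess_of_hasDerivAt (T := T) (b := b)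
    (hasDerivAt_sineState (a := a) (c := c) (T := T) (μ := μ) (s := s)) continuous_sineControl
  refine ⟨_, _, _, h₁, h₂, h₃, h₄, h₅, h₆, h₇, h₈, ?_, fun t ht => ?_⟩
  · have h0 : action 0 (sineState a c T μ s) (sineControl a c T μ s) = 0 := integral_same
    simp [sineState_zero, sineState_self hT0.ne' hμT, h0, hact]
  · exact abs_sineState_lt_and_abs_add_action_lt hT0 hε1 hεδ (ha.le.trans hρε)
      (hb.le.trans hρε) (hc.le.trans hρε) hs hμ ht
end

section
/- Example 2, case a < −2: Let a < −2. The control dynamical system ẋ₁(t) = u(t), ẋ₂(t) = u(t)³, u(t) ∈ (a,+∞) for a.e. t ∈ [0,1], with boundary conditions x₁(0) = x₂(0) = 0 and x₁(1) = x₂(1) = 1, is locally controllable with respect to the admissible process given by x̂₁(t) = x̂₂(t) = t and û(t) = 1 for t ∈ [0,1]. -/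
/-!
The endpoint conditions prescribe the moments `A = ∫₀¹ u` and `B = ∫₀¹ u³` near `(1, 1)`, and
the trajectories stay uniformly close to `t` as soon as `u` and `u³` are `L¹`-close to `1`.
Perturb the constant control `A` into a step control equal to `A + h` on a set of measure `m / h`
and to `A - k` on a set of measure `m / k`: the mean stays `A`, while
`∫₀¹ u³ = A³ + m (h + k) (3A + h - k)`. With `h = k = 1` the last factor is positive and every
`B ≥ A³` is reached. Reaching `B < A³` needs `A - k < -2A - h ≈ -2`, which the constraint `u > a`
permits precisely because `a < -2`. In both cases `m → 0` as `(A, B) → (1, 1)`, so the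
perturbation is small in `L¹`.
-/

open MeasureTheory Set intervalIntegral Filter Topology

theorem intervalIntegrable_of_abs_le {u : ℝ → ℝ} {C : ℝ} (hu : Measurable u)
    (hC : ∀ t, |u t| ≤ C) (c d : ℝ) : IntervalIntegrable u volume c d :=
  intervalIntegrable_const.mono_fun' hu.aestronglyMeasurable (ae_of_all _ hC)

noncomputable def threeStep (s s' p q r : ℝ) (t : ℝ) : ℝ :=
  if t ≤ s then p else if t ≤ s + s' then q else r

section threeStep

variable {s s' : ℝ} (p q r : ℝ)

theorem measurable_threeStep : Measurable (threeStep s s' p q r) :=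
  Measurable.ite measurableSet_Iic measurable_const
    (Measurable.ite measurableSet_Iic measurable_const measurable_const)

theorem abs_threeStep_le (t : ℝ) : |threeStep s s' p q r t| ≤ |p| + |q| + |r| := by
  unfold threeStep
  split_ifs <;> linarith [abs_nonneg p, abs_nonneg q, abs_nonneg r]

theorem integral_threeStep (hs : 0 ≤ s) (hs' : 0 ≤ s') (hss' : s + s' ≤ 1) :
    ∫ t in (0:ℝ)..1, threeStep s s' p q r t = s * p + s' * q + (1 - s - s') * r := by
  have hint : ∀ c d, IntervalIntegrable (threeStep s s' p q r) volume c d :=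
    intervalIntegrable_of_abs_le (measurable_threeStep p q r) (abs_threeStep_le p q r)
  have piece : ∀ {c d : ℝ} (v : ℝ), c ≤ d → (∀ t ∈ Ioc c d, threeStep s s' p q r t = v) →
      ∫ t in c..d, threeStep s s' p q r t = (d - c) * v := by
    intro c d v hcd h
    rw [integral_congr_ae (g := fun _ => v) (ae_of_all _ fun t ht => h t (uIoc_of_le hcd ▸ ht)),
      intervalIntegral.integral_const, smul_eq_mul]
  rw [← integral_add_adjacent_intervals (hint 0 (s + s')) (hint _ 1),
    ← integral_add_adjacent_intervals (hint 0 s) (hint s _),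
    piece p hs fun t ht => if_pos ht.2,
    piece q (by linarith) fun t ht => by simp [threeStep, not_le.2 ht.1, ht.2],
    piece r hss' fun t ht => by
      simp [threeStep, not_le.2 ht.1, not_le.2 ((le_add_of_nonneg_right hs').trans_lt ht.1)]]
  ring

theorem integral_comp_threeStep (f : ℝ → ℝ) (hs : 0 ≤ s) (hs' : 0 ≤ s') (hss' : s + s' ≤ 1) :
    ∫ t in (0:ℝ)..1, f (threeStep s s' p q r t) = s * f p + s' * f q + (1 - s - s') * f r := by
  rw [← integral_threeStep _ _ _ hs hs' hss']
  congr 1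
  funext t
  unfold threeStep
  split_ifs <;> rfl

end threeStep

def HasNearbyProcess (a δ : ℝ) (y : (ℝ × ℝ) × (ℝ × ℝ)) : Prop :=
  ∃ x₁ x₂ u : ℝ → ℝ,
    ContinuousOn x₁ (Icc (0:ℝ) 1) ∧ ContinuousOn x₂ (Icc (0:ℝ) 1) ∧
    Measurable u ∧
    (∃ C : ℝ, ∀ᵐ t ∂(volume.restrict (Icc (0:ℝ) 1)), |u t| ≤ C) ∧
    (∀ᵐ t ∂(volume.restrict (Icc (0:ℝ) 1)), a < u t) ∧
    IntervalIntegrable u volume 0 1 ∧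
    IntervalIntegrable (fun s => (u s) ^ 3) volume 0 1 ∧
    (∀ t ∈ Icc (0:ℝ) 1, x₁ t = x₁ 0 + ∫ s in (0:ℝ)..t, u s) ∧
    (∀ t ∈ Icc (0:ℝ) 1, x₂ t = x₂ 0 + ∫ s in (0:ℝ)..t, (u s) ^ 3) ∧
    (x₁ 0, x₂ 0) = y.1 ∧ (x₁ 1, x₂ 1) = ((1:ℝ), (1:ℝ)) + y.2 ∧
    (∀ t ∈ Icc (0:ℝ) 1, |x₁ t - t| < δ ∧ |x₂ t - t| < δ)

def IsNearbyControl (a η A B : ℝ) (u : ℝ → ℝ) : Prop :=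
  Measurable u ∧ (∃ C, ∀ t, |u t| ≤ C) ∧ (∀ t, a < u t) ∧
    ∫ t in (0:ℝ)..1, u t = A ∧ ∫ t in (0:ℝ)..1, u t ^ 3 = B ∧
    ∫ t in (0:ℝ)..1, |u t - 1| < η ∧ ∫ t in (0:ℝ)..1, |u t ^ 3 - 1| < η

theorem abs_add_integral_sub_le {v : ℝ → ℝ} (hv : ∀ c d, IntervalIntegrable v volume c d)
    (x₀ : ℝ) {t : ℝ} (ht : t ∈ Icc (0:ℝ) 1) :
    |x₀ + (∫ s in (0:ℝ)..t, v s) - t| ≤ |x₀| + ∫ s in (0:ℝ)..1, |v s - 1| := by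
  have hsub : (∫ s in (0:ℝ)..t, v s) - t = ∫ s in (0:ℝ)..t, (v s - 1) := by
    simp [integral_sub (hv 0 t) intervalIntegrable_const]
  calc |x₀ + (∫ s in (0:ℝ)..t, v s) - t| = |x₀ + ∫ s in (0:ℝ)..t, (v s - 1)| := by
        rw [add_sub_assoc, hsub]
    _ ≤ |x₀| + |∫ s in (0:ℝ)..t, (v s - 1)| := abs_add_le _ _
    _ ≤ |x₀| + ∫ s in (0:ℝ)..t, |v s - 1| := by gcongr; exact abs_integral_le_integral_abs ht.1
    _ ≤ |x₀| + ∫ s in (0:ℝ)..1, |v s - 1| := by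
        gcongr
        exact integral_mono_interval le_rfl ht.1 ht.2 (ae_of_all _ fun _ => abs_nonneg _)
          ((hv 0 1).sub intervalIntegrable_const).abs

theorem hasNearbyProcess_of_isNearbyControl {a δ η : ℝ} {y : (ℝ × ℝ) × (ℝ × ℝ)} {u : ℝ → ℝ}
    (hu : IsNearbyControl a η (1 + y.2.1 - y.1.1) (1 + y.2.2 - y.1.2) u)
    (h₁ : |y.1.1| + η ≤ δ) (h₂ : |y.1.2| + η ≤ δ) : HasNearbyProcess a δ y := by
  obtain ⟨hmeas, ⟨C, hC⟩, hua, hA, hB, hη₁, hη₂⟩ := hu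
  have hint := intervalIntegrable_of_abs_le hmeas hC
  have hint₃ := intervalIntegrable_of_abs_le (hmeas.pow_const 3) fun t => by
    rw [abs_pow]; exact pow_le_pow_left₀ (abs_nonneg _) (hC t) 3
  refine ⟨fun t => y.1.1 + ∫ s in (0:ℝ)..t, u s, fun t => y.1.2 + ∫ s in (0:ℝ)..t, u s ^ 3, u,
    (continuous_const.add (continuous_primitive hint 0)).continuousOn,
    (continuous_const.add (continuous_primitive hint₃ 0)).continuousOn,
    hmeas, ⟨C, ae_of_all _ hC⟩, ae_of_all _ hua, hint 0 1, hint₃ 0 1,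
    fun t _ => by simp, fun t _ => by simp, by simp, ?_, fun t ht => ⟨?_, ?_⟩⟩
  · ext <;> simp [hA, hB]
  · exact (abs_add_integral_sub_le hint _ ht).trans_lt (by linarith)
  · exact (abs_add_integral_sub_le hint₃ _ ht).trans_lt (by linarith)

theorem isNearbyControl_threeStep {a η A B h k s : ℝ} (hh : 0 < h) (hk : 0 < k) (hs : 0 ≤ s)
    (hlen : s / h + s / k ≤ 1) (hadm : a < A - k)
    (hcube : s * ((h + k) * (3 * A + h - k)) = B - A ^ 3)
    (herr₁ : s / h * |A + h - 1| + s / k * |A - k - 1| + (1 - s / h - s / k) * |A - 1| < η)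
    (herr₃ : s / h * |(A + h) ^ 3 - 1| + s / k * |(A - k) ^ 3 - 1|
      + (1 - s / h - s / k) * |A ^ 3 - 1| < η) :
    IsNearbyControl a η A B (threeStep (s / h) (s / k) (A + h) (A - k) A) := by
  have hsh : 0 ≤ s / h := by positivity
  have hsk : 0 ≤ s / k := by positivity
  refine ⟨measurable_threeStep _ _ _, ⟨_, abs_threeStep_le _ _ _⟩, fun t => ?_, ?_, ?_,
    (integral_comp_threeStep _ _ _ (|· - 1|) hsh hsk hlen).trans_lt herr₁,
    (integral_comp_threeStep _ _ _ (|· ^ 3 - 1|) hsh hsk hlen).trans_lt herr₃⟩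
  · unfold threeStep
    split_ifs <;> linarith
  · rw [integral_threeStep _ _ _ hsh hsk hlen]
    field_simp
    ring
  · refine (integral_comp_threeStep _ _ _ (· ^ 3) hsh hsk hlen).trans ?_
    field_simp
    linear_combination (h * k) * hcube

theorem eventually_exists_isNearbyControl_of_sign {a η h k : ℝ} (hη : 0 < η) (hh : 0 < h)
    (hk : 0 < k) (hka : a < 1 - k) (hhk : 3 + h - k ≠ 0) :
    ∀ᶠ p : ℝ × ℝ in 𝓝 (1, 1), 0 ≤ (p.2 - p.1 ^ 3) * (3 + h - k) →
      ∃ u, IsNearbyControl a η p.1 p.2 u := by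
  set m : ℝ × ℝ → ℝ := fun p => (p.2 - p.1 ^ 3) / ((h + k) * (3 * p.1 + h - k))
  have hm : ContinuousAt m (1, 1) :=
    ContinuousAt.div (by fun_prop) (by fun_prop) (by simpa using ⟨by linarith, hhk⟩)
  have hm₀ : m (1, 1) = 0 := by simp [m]
  have e_sign : ∀ᶠ p : ℝ × ℝ in 𝓝 (1, 1), 0 < (3 * p.1 + h - k) * (3 + h - k) :=
    continuousAt_const.eventually_lt (by fun_prop) (by simpa using mul_self_pos.2 hhk)
  have e_len : ∀ᶠ p in 𝓝 (1, 1), m p / h + m p / k < 1 :=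
    (by fun_prop : ContinuousAt (fun p => m p / h + m p / k) (1, 1)).eventually_lt
      continuousAt_const (by simp [hm₀])
  have e_adm : ∀ᶠ p : ℝ × ℝ in 𝓝 (1, 1), a < p.1 - k :=
    continuousAt_const.eventually_lt (by fun_prop) (by simpa using hka)
  have e_err₁ : ∀ᶠ p : ℝ × ℝ in 𝓝 (1, 1), m p / h * |p.1 + h - 1| + m p / k * |p.1 - k - 1|
      + (1 - m p / h - m p / k) * |p.1 - 1| < η :=
    (by fun_prop : ContinuousAt (fun p : ℝ × ℝ => m p / h * |p.1 + h - 1|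
      + m p / k * |p.1 - k - 1| + (1 - m p / h - m p / k) * |p.1 - 1|) (1, 1)).eventually_lt
      continuousAt_const (by simpa [hm₀] using hη)
  have e_err₃ : ∀ᶠ p : ℝ × ℝ in 𝓝 (1, 1), m p / h * |(p.1 + h) ^ 3 - 1|
      + m p / k * |(p.1 - k) ^ 3 - 1| + (1 - m p / h - m p / k) * |p.1 ^ 3 - 1| < η :=
    (by fun_prop : ContinuousAt (fun p : ℝ × ℝ => m p / h * |(p.1 + h) ^ 3 - 1|
      + m p / k * |(p.1 - k) ^ 3 - 1| + (1 - m p / h - m p / k) * |p.1 ^ 3 - 1|)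
      (1, 1)).eventually_lt continuousAt_const (by simpa [hm₀] using hη)
  filter_upwards [e_sign, e_len, e_adm, e_err₁, e_err₃]
    with ⟨A, B⟩ hsign hlen hadm herr₁ herr₃ hBA
  dsimp only at *
  have hcube : m (A, B) * ((h + k) * (3 * A + h - k)) = B - A ^ 3 :=
    div_mul_cancel₀ _ (mul_ne_zero (by linarith) fun h0 => by simp [h0] at hsign)
  have hm_nonneg : 0 ≤ m (A, B) := by
    refine nonneg_of_mul_nonneg_left (b := (h + k) * ((3 * A + h - k) * (3 + h - k))) ?_
      (by positivity)
    linear_combination hBA - (3 + h - k) * hcube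
  exact ⟨_, isNearbyControl_threeStep hh hk hm_nonneg hlen.le hadm hcube herr₁ herr₃⟩

theorem eventually_exists_isNearbyControl {a η : ℝ} (ha : a < -2) (hη : 0 < η) :
    ∀ᶠ p : ℝ × ℝ in 𝓝 (1, 1), ∃ u, IsNearbyControl a η p.1 p.2 u := by
  have raise := eventually_exists_isNearbyControl_of_sign (a := a) (h := 1) (k := 1) hη
    one_pos one_pos (by linarith) (by norm_num)
  have lower := eventually_exists_isNearbyControl_of_sign (a := a) (h := -(a + 2) / 3)
    (k := (5 - 2 * a) / 3) hη (by linarith) (by linarith) (by linarith) (by linarith)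
  filter_upwards [raise, lower] with p hraise hlower
  rcases le_total (p.1 ^ 3) p.2 with hle | hle
  · exact hraise (by nlinarith)
  · exact hlower (by nlinarith)

/-- **Example 2, case `a < −2`.**  The system `ẋ₁ = u`, `ẋ₂ = u³`, `u(t) ∈ (a,+∞)` a.e.
on `[0,1]`, with boundary conditions `x(0) = (0,0)`, `x(1) = (1,1)`, is locally controllable
with respect to the admissible process `x̂₁(t)=x̂₂(t)=t`, `û(t)=1`. -/
theorem example2_locally_controllable (a : ℝ) (ha : a < -2) :
    ∀ δ > (0:ℝ), ∃ ρ > (0:ℝ),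
      ∀ y : (ℝ × ℝ) × (ℝ × ℝ), ‖y‖ < ρ →
        ∃ x₁ x₂ u : ℝ → ℝ,
          ContinuousOn x₁ (Icc (0:ℝ) 1) ∧ ContinuousOn x₂ (Icc (0:ℝ) 1) ∧
          Measurable u ∧
          (∃ C : ℝ, ∀ᵐ t ∂(volume.restrict (Icc (0:ℝ) 1)), |u t| ≤ C) ∧
          (∀ᵐ t ∂(volume.restrict (Icc (0:ℝ) 1)), a < u t) ∧
          IntervalIntegrable u volume 0 1 ∧
          IntervalIntegrable (fun s => (u s) ^ 3) volume 0 1 ∧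
          (∀ t ∈ Icc (0:ℝ) 1, x₁ t = x₁ 0 + ∫ s in (0:ℝ)..t, u s) ∧
          (∀ t ∈ Icc (0:ℝ) 1, x₂ t = x₂ 0 + ∫ s in (0:ℝ)..t, (u s) ^ 3) ∧
          (x₁ 0, x₂ 0) = y.1 ∧ (x₁ 1, x₂ 1) = ((1:ℝ), (1:ℝ)) + y.2 ∧
          (∀ t ∈ Icc (0:ℝ) 1, |x₁ t - t| < δ ∧ |x₂ t - t| < δ) := by
  intro δ hδ
  have hmoments : Tendsto (fun y : (ℝ × ℝ) × (ℝ × ℝ) =>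
      (1 + y.2.1 - y.1.1, 1 + y.2.2 - y.1.2)) (𝓝 0) (𝓝 (1, 1)) := by
    simpa using ((by fun_prop : Continuous fun y : (ℝ × ℝ) × (ℝ × ℝ) =>
      (1 + y.2.1 - y.1.1, 1 + y.2.2 - y.1.2)).tendsto 0)
  have hstart : ∀ᶠ y : (ℝ × ℝ) × (ℝ × ℝ) in 𝓝 0, |y.1.1| < δ / 2 ∧ |y.1.2| < δ / 2 := by
    have hcont : Continuous fun y : (ℝ × ℝ) × (ℝ × ℝ) => max |y.1.1| |y.1.2| := by
      fun_prop
    simpa using hcont.continuousAt.eventually_lt continuousAt_const (by simpa using hδ)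
  have hprocess : ∀ᶠ y in 𝓝 0, HasNearbyProcess a δ y := by
    filter_upwards [hmoments.eventually (eventually_exists_isNearbyControl ha (half_pos hδ)),
      hstart] with y ⟨u, hu⟩ ⟨h₁, h₂⟩
    exact hasNearbyProcess_of_isNearbyControl hu (by linarith) (by linarith)
  obtain ⟨ρ, hρ, h⟩ := Metric.eventually_nhds_iff.1 hprocess
  exact ⟨ρ, hρ, fun y hy => h (by simpa using hy)⟩
end

section
/- Example 2, case a ≥ −2 (non-reachability): Let −2 ≤ a < 1 and ε > 0. There is no pair (x,u) with x ∈ AC([0,1],ℝ²) and u ∈ L∞([0,1],ℝ) such that ẋ₁(t) = u(t), ẋ₂(t) = u(t)³ and u(t) ∈ (a,+∞) for a.e. t ∈ [0,1], x(0) = (0,0), and x(1) = (1, 1−ε). -/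
open MeasureTheory Set intervalIntegral

/-! The tangent line of `t ↦ t³` at `t = 1` is `t ↦ 3t - 2`, and the cube stays above it on
`[-2, ∞)` because `t³ - (3t - 2) = (t - 1)²(t + 2)`. Integrating over `[0, 1]` gives
`∫ u³ ≥ 3 ∫ u - 2`, so `x₁(1) = 1` forces `x₂(1) ≥ 1`. -/

lemma three_mul_sub_two_le_pow_three {t : ℝ} (ht : -2 ≤ t) : 3 * t - 2 ≤ t ^ 3 := by
  nlinarith [mul_nonneg (sq_nonneg (t - 1)) (neg_le_iff_add_nonneg.mp ht)]

lemma three_mul_integral_sub_le_integral_pow_three {u : ℝ → ℝ} {a b : ℝ} (hab : a ≤ b)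
    (hu : IntervalIntegrable u volume a b)
    (hu3 : IntervalIntegrable (fun t => u t ^ 3) volume a b)
    (h : ∀ᵐ t ∂(volume.restrict (Icc a b)), -2 ≤ u t) :
    3 * (∫ t in a..b, u t) - 2 * (b - a) ≤ ∫ t in a..b, u t ^ 3 := by
  have hlin : (∫ t in a..b, (3 * u t - 2)) = 3 * (∫ t in a..b, u t) - 2 * (b - a) := by
    rw [intervalIntegral.integral_sub (hu.const_mul 3) intervalIntegrable_const,
      intervalIntegral.integral_const_mul, intervalIntegral.integral_const, smul_eq_mul]
    ring
  rw [← hlin]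
  exact integral_mono_ae_restrict hab ((hu.const_mul 3).sub intervalIntegrable_const) hu3
    (h.mono fun t ht => three_mul_sub_two_le_pow_three ht)

theorem example2_nonreachability_general (a ε : ℝ) (ha : -2 ≤ a) (hε : 0 < ε) :
    ¬ ∃ (x₁ x₂ u : ℝ → ℝ),
      ContinuousOn x₁ (Icc (0:ℝ) 1) ∧ ContinuousOn x₂ (Icc (0:ℝ) 1) ∧
      Measurable u ∧
      (∃ C : ℝ, ∀ᵐ t ∂(volume.restrict (Icc (0:ℝ) 1)), |u t| ≤ C) ∧
      (∀ᵐ t ∂(volume.restrict (Icc (0:ℝ) 1)), a < u t) ∧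
      IntervalIntegrable u volume 0 1 ∧
      IntervalIntegrable (fun t => (u t) ^ 3) volume 0 1 ∧
      (∀ t ∈ Icc (0:ℝ) 1, x₁ t = x₁ 0 + ∫ s in (0:ℝ)..t, u s) ∧
      (∀ t ∈ Icc (0:ℝ) 1, x₂ t = x₂ 0 + ∫ s in (0:ℝ)..t, (u s) ^ 3) ∧
      x₁ 0 = 0 ∧ x₂ 0 = 0 ∧ x₁ 1 = 1 ∧ x₂ 1 = 1 - ε := by
  rintro ⟨x₁, x₂, u, -, -, -, -, hu_gt, hu, hu3, hx₁, hx₂, h0₁, h0₂, h1₁, h1₂⟩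
  have hI₁ : (∫ s in (0:ℝ)..1, u s) = 1 := by
    simpa [h0₁, h1₁] using (hx₁ 1 (right_mem_Icc.mpr zero_le_one)).symm
  have hI₂ : (∫ s in (0:ℝ)..1, u s ^ 3) = 1 - ε := by
    simpa [h0₂, h1₂] using (hx₂ 1 (right_mem_Icc.mpr zero_le_one)).symm
  have hu_ge : ∀ᵐ t ∂(volume.restrict (Icc (0:ℝ) 1)), -2 ≤ u t :=
    hu_gt.mono fun t ht => ha.trans ht.le
  have key := three_mul_integral_sub_le_integral_pow_three zero_le_one hu hu3 hu_ge
  rw [hI₁, hI₂] at key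
  linarith

/-- **Example 2, case `a ≥ −2` (non-reachability).**
For `−2 ≤ a < 1` and `ε > 0` there is no pair `(x,u)` with `x ∈ AC([0,1],ℝ²)`,
`u ∈ L∞([0,1],ℝ)` such that `ẋ₁ = u`, `ẋ₂ = u³`, `u(t) ∈ (a,+∞)` a.e.,
`x(0) = (0,0)` and `x(1) = (1, 1−ε)`. -/
theorem example2_nonreachability (a ε : ℝ) (ha : -2 ≤ a) (ha1 : a < 1) (hε : 0 < ε) :
    ¬ ∃ (x₁ x₂ u : ℝ → ℝ),
      ContinuousOn x₁ (Icc (0:ℝ) 1) ∧ ContinuousOn x₂ (Icc (0:ℝ) 1) ∧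
      Measurable u ∧
      (∃ C : ℝ, ∀ᵐ t ∂(volume.restrict (Icc (0:ℝ) 1)), |u t| ≤ C) ∧
      (∀ᵐ t ∂(volume.restrict (Icc (0:ℝ) 1)), a < u t) ∧
      IntervalIntegrable u volume 0 1 ∧
      IntervalIntegrable (fun t => (u t) ^ 3) volume 0 1 ∧
      (∀ t ∈ Icc (0:ℝ) 1, x₁ t = x₁ 0 + ∫ s in (0:ℝ)..t, u s) ∧
      (∀ t ∈ Icc (0:ℝ) 1, x₂ t = x₂ 0 + ∫ s in (0:ℝ)..t, (u s) ^ 3) ∧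
      x₁ 0 = 0 ∧ x₂ 0 = 0 ∧ x₁ 1 = 1 ∧ x₂ 1 = 1 - ε :=
  example2_nonreachability_general a ε ha hε
end
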